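/- arXiv:2512.24357 — 2 statements merged into one kernel-verified Lean document; each statement's English description precedes it below -/
import Mathlib

section
/- Let k be a field, A a finite-dimensional associative unital k-algebra whose Jacobson radical J satisfies J² = 0, and A_s a k-subalgebra of A such that A = A_s ⊕ J as k-vector spaces (internal direct sum of subspaces). Then the restriction map σ ↦ σ|_J is a group isomorphism from {σ ∈ Aut_k(A) : σ(a) = a for all a ∈ A_s} onto the group of bijective k-linear maps ψ : J → J satisfying ψ(a r b) = a ψ(r) b for all a, b ∈ A_s and r ∈ J (the A_s-bimodule automorphisms of J). -/
/-!
An automorphism fixing `A_s` is determined by its restriction to `J`, since `A = A_s + J`, and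
that restriction is `A_s`-bilinear. Conversely a bimodule automorphism `ψ` of `J` extends to the
linear automorphism `id ⊕ ψ` of `A = A_s ⊕ J`, which is multiplicative because `J² = 0`: in
`(s + r)(s' + r') = ss' + sr' + rs'` the term `rr'` vanishes, and so does `ψ r ψ r'` in the product
of the images.
-/

noncomputable section

variable (k A : Type*) [Field k] [Ring A] [Algebra k A]

/-- The Jacobson radical of `A`, viewed as a `k`-submodule of `A`. -/
def jacobsonRadical : Submodule k A :=
  Submodule.restrictScalars k ((⊥ : Ideal A).jacobson)

/-- The Jacobson radical is closed under right multiplication. -/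
theorem jacobsonRadical.mul_mem_right {x : A} (b : A) (hx : x ∈ jacobsonRadical k A) :
    x * b ∈ jacobsonRadical k A := by
  have hx' : x ∈ ((⊥ : Ideal A).jacobson) := hx
  rw [Ideal.mem_jacobson_iff] at hx'
  show x * b ∈ ((⊥ : Ideal A).jacobson)
  rw [Ideal.mem_jacobson_iff]
  intro y
  obtain ⟨u, hu⟩ := hx' (b * y)
  rw [Ideal.mem_bot] at hu
  have hc : u * (b * y) * x + u = 1 := sub_eq_zero.mp hu
  refine ⟨1 - y * x * u * b, ?_⟩
  rw [Ideal.mem_bot]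
  have expand : (1 - y * x * u * b) * y * (x * b) + (1 - y * x * u * b) - 1
      = y * x * b - y * x * (u * (b * y) * x + u) * b := by noncomm_ring
  rw [expand, hc]
  noncomm_ring

theorem jacobsonRadical.mul_mem {x y : A} (hx : x ∈ jacobsonRadical k A)
    (hy : y ∈ jacobsonRadical k A) : x * y ∈ jacobsonRadical k A :=
  Ideal.mul_mem_left _ x hy

/-- The subgroup of `k`-algebra automorphisms of `A` fixing the subalgebra `A_s` pointwise. -/
def fixSubgroup (A_s : Subalgebra k A) : Subgroup (A ≃ₐ[k] A) where
  carrier := {σ | ∀ a ∈ A_s, σ a = a}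
  one_mem' := fun _ _ => rfl
  mul_mem' := by
    intro σ τ hσ hτ a ha
    show σ (τ a) = a
    rw [hτ a ha, hσ a ha]
  inv_mem' := by
    intro σ hσ a ha
    show σ.symm a = a
    conv_lhs => rw [← hσ a ha]
    exact σ.symm_apply_apply a

/-- The subgroup of bijective `k`-linear maps `ψ : J → J` such that
`ψ (a r b) = a · ψ r · b` for `a, b ∈ A_s`, `r ∈ J` (the `A_s`-bimodule automorphisms of `J`). -/
def bimodAutSubgroup (A_s : Subalgebra k A) :
    Subgroup ((jacobsonRadical k A) ≃ₗ[k] (jacobsonRadical k A)) where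
  carrier := {ψ |
    ∀ a b : A_s, ∀ r : jacobsonRadical k A,
      ∀ h : (a : A) * (r : A) * (b : A) ∈ jacobsonRadical k A,
      ((ψ ⟨(a : A) * (r : A) * (b : A), h⟩ : A) = (a : A) * (ψ r : A) * (b : A))}
  one_mem' := fun _ _ _ _ => rfl
  mul_mem' := by
    rintro ψ φ hψ hφ
    intro a b r h
    have hmem : (a : A) * (φ r : A) * (b : A) ∈ jacobsonRadical k A := by
      rw [← hφ a b r h]
      exact (φ ⟨(a : A) * (r : A) * (b : A), h⟩).2
    have key : φ ⟨(a : A) * (r : A) * (b : A), h⟩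
        = ⟨(a : A) * (φ r : A) * (b : A), hmem⟩ := Subtype.ext (hφ a b r h)
    show ((ψ (φ _) : A) = _)
    rw [key, hψ a b (φ r) hmem]
    rfl
  inv_mem' := by
    rintro ψ hψ
    intro a b r h
    have hmem : (a : A) * (ψ.symm r : A) * (b : A) ∈ jacobsonRadical k A :=
      jacobsonRadical.mul_mem_right k A (b : A)
        (Ideal.mul_mem_left _ (a : A) (ψ.symm r).2)
    have key : ψ ⟨(a : A) * (ψ.symm r : A) * (b : A), hmem⟩
        = ⟨(a : A) * (r : A) * (b : A), h⟩ := by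
      refine Subtype.ext ?_
      rw [hψ a b (ψ.symm r) hmem]
      simp
    show ((ψ.symm ⟨(a : A) * (r : A) * (b : A), h⟩ : A)
        = (a : A) * (ψ.symm r : A) * (b : A))
    rw [← key, ψ.symm_apply_apply]

namespace Submodule

variable {R E : Type*} [Ring R] [AddCommGroup E] [Module R E] {p q : Submodule R E}

def extendOfIsCompl (h : IsCompl p q) (ψ : q ≃ₗ[R] q) : E ≃ₗ[R] E :=
  (prodEquivOfIsCompl p q h).symm ≪≫ₗ (LinearEquiv.refl R p).prodCongr ψ ≪≫ₗ
    prodEquivOfIsCompl p q h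

theorem extendOfIsCompl_apply_add (h : IsCompl p q) (ψ : q ≃ₗ[R] q) (x : p) (y : q) :
    extendOfIsCompl h ψ (x + y) = x + ψ y := by
  have : (prodEquivOfIsCompl p q h).symm (x + y) = (x, y) :=
    (LinearEquiv.symm_apply_eq _).mpr rfl
  simp [extendOfIsCompl, this]

theorem extendOfIsCompl_apply_left (h : IsCompl p q) (ψ : q ≃ₗ[R] q) {x : E} (hx : x ∈ p) :
    extendOfIsCompl h ψ x = x := by
  simpa using extendOfIsCompl_apply_add h ψ ⟨x, hx⟩ 0

theorem extendOfIsCompl_apply_right (h : IsCompl p q) (ψ : q ≃ₗ[R] q) (y : q) :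
    extendOfIsCompl h ψ y = ψ y := by
  simpa using extendOfIsCompl_apply_add h ψ 0 y

end Submodule

section

variable {k A}

theorem LinearMap.map_mul_of_codisjoint_of_mul_eq_zero {B : Subalgebra k A} {I : Submodule k A}
    (hBI : Codisjoint (Subalgebra.toSubmodule B) I) (hI : ∀ x ∈ I, ∀ y ∈ I, x * y = 0)
    {f : A →ₗ[k] A} (hfB : ∀ b ∈ B, f b = b) (hfI : ∀ x ∈ I, f x ∈ I)
    (hleft : ∀ b ∈ B, ∀ x ∈ I, f (b * x) = b * f x)
    (hright : ∀ x ∈ I, ∀ b ∈ B, f (x * b) = f x * b) (x y : A) :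
    f (x * y) = f x * f y := by
  have hdecomp : ∀ z : A, ∃ b ∈ B, ∃ u ∈ I, b + u = z := fun z ↦
    Submodule.mem_sup.mp (hBI.eq_top ▸ Submodule.mem_top)
  obtain ⟨b, hb, u, hu, rfl⟩ := hdecomp x
  obtain ⟨b', hb', u', hu', rfl⟩ := hdecomp y
  calc f ((b + u) * (b' + u')) = f (b * b' + b * u' + u * b') := by
        rw [add_mul, mul_add, mul_add, hI u hu u' hu', add_zero, add_assoc]
    _ = b * b' + b * f u' + f u * b' := by
        rw [map_add, map_add, hfB _ (B.mul_mem hb hb'), hleft b hb u' hu', hright u hu b' hb']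
    _ = (b + f u) * (b' + f u') := by
        rw [add_mul, mul_add, mul_add, hI _ (hfI u hu) _ (hfI u' hu'), add_zero,
          add_assoc]
    _ = f (b + u) * f (b' + u') := by rw [map_add, map_add, hfB b hb, hfB b' hb']

theorem AlgEquiv.apply_mem_jacobsonRadical (σ : A ≃ₐ[k] A) {x : A}
    (hx : x ∈ jacobsonRadical k A) : σ x ∈ jacobsonRadical k A := by
  have : RingHomSurjective (σ : A →+* A) := ⟨σ.surjective⟩
  change x ∈ (⊥ : Ideal A).jacobson at hx
  change σ x ∈ (⊥ : Ideal A).jacobson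
  rw [Ideal.jacobson_bot] at hx ⊢
  exact Ring.le_comap_jacobson (σ : A →+* A) hx

theorem AlgEquiv.map_jacobsonRadical (σ : A ≃ₐ[k] A) :
    (jacobsonRadical k A).map σ.toLinearMap = jacobsonRadical k A :=
  le_antisymm (Submodule.map_le_iff_le_comap.mpr fun _ ↦ σ.apply_mem_jacobsonRadical)
    fun x hx ↦ ⟨σ.symm x, σ.symm.apply_mem_jacobsonRadical hx, σ.apply_symm_apply x⟩

def AlgEquiv.restrictJacobsonRadical (σ : A ≃ₐ[k] A) :
    jacobsonRadical k A ≃ₗ[k] jacobsonRadical k A :=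
  LinearEquiv.ofSubmodules σ.toLinearEquiv _ _ σ.map_jacobsonRadical

@[simp]
theorem AlgEquiv.coe_restrictJacobsonRadical_apply (σ : A ≃ₐ[k] A) (x : jacobsonRadical k A) :
    (σ.restrictJacobsonRadical x : A) = σ x :=
  rfl

variable (k A) in
def restrictJacobsonRadicalHom :
    (A ≃ₐ[k] A) →* (jacobsonRadical k A ≃ₗ[k] jacobsonRadical k A) where
  toFun := AlgEquiv.restrictJacobsonRadical
  map_one' := rfl
  map_mul' _ _ := rfl

variable {A_s : Subalgebra k A}

namespace bimodAutSubgroup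

variable {ψ : jacobsonRadical k A ≃ₗ[k] jacobsonRadical k A} (hψ : ψ ∈ bimodAutSubgroup k A A_s)
include hψ

theorem coe_apply_mul_left {a : A} (ha : a ∈ A_s) (r : jacobsonRadical k A)
    (h : a * r ∈ jacobsonRadical k A) : (ψ ⟨a * r, h⟩ : A) = a * ψ r := by
  simpa using hψ ⟨a, ha⟩ 1 r (by simpa using h)

theorem coe_apply_mul_right (r : jacobsonRadical k A) {b : A} (hb : b ∈ A_s)
    (h : r * b ∈ jacobsonRadical k A) : (ψ ⟨r * b, h⟩ : A) = ψ r * b := by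
  simpa using hψ 1 ⟨b, hb⟩ r (by simpa using h)

end bimodAutSubgroup

theorem restrictJacobsonRadical_mem_bimodAutSubgroup {σ : A ≃ₐ[k] A}
    (hσ : σ ∈ fixSubgroup k A A_s) : σ.restrictJacobsonRadical ∈ bimodAutSubgroup k A A_s := by
  intro a b r _
  simp only [AlgEquiv.coe_restrictJacobsonRadical_apply, map_mul, hσ a a.2, hσ b b.2]

variable (A_s) in
def fixSubgroupRestrictHom : fixSubgroup k A A_s →* bimodAutSubgroup k A A_s :=
  ((restrictJacobsonRadicalHom k A).comp (fixSubgroup k A A_s).subtype).codRestrict _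
    fun σ ↦ restrictJacobsonRadical_mem_bimodAutSubgroup σ.2

theorem fixSubgroupRestrictHom_injective
    (h : Codisjoint (Subalgebra.toSubmodule A_s) (jacobsonRadical k A)) :
    Function.Injective (fixSubgroupRestrictHom A_s) := by
  intro σ τ hστ
  refine Subtype.ext (LinearMap.ext_on_codisjoint h (fun a ha ↦ ?_) fun r hr ↦ ?_)
  · exact (σ.2 a ha).trans (τ.2 a ha).symm
  · exact congr_arg (fun ψ : bimodAutSubgroup k A A_s ↦ ((ψ.1 ⟨r, hr⟩ : _) : A)) hστ

theorem fixSubgroupRestrictHom_surjective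
    (hJ2 : ∀ x ∈ jacobsonRadical k A, ∀ y ∈ jacobsonRadical k A, x * y = 0)
    (h : IsCompl (Subalgebra.toSubmodule A_s) (jacobsonRadical k A)) :
    Function.Surjective (fixSubgroupRestrictHom A_s) := by
  rintro ⟨ψ, hψ⟩
  set e := Submodule.extendOfIsCompl h ψ
  have he_fix : ∀ a ∈ A_s, e a = a := fun a ha ↦ Submodule.extendOfIsCompl_apply_left h ψ ha
  have he_J (r : A) (hr : r ∈ jacobsonRadical k A) : e r = ψ ⟨r, hr⟩ :=
    Submodule.extendOfIsCompl_apply_right h ψ ⟨r, hr⟩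
  have he_mul := LinearMap.map_mul_of_codisjoint_of_mul_eq_zero (f := e.toLinearMap) h.codisjoint
    hJ2 he_fix (fun r hr ↦ by simp [he_J r hr])
    (fun a ha r hr ↦ by
      rw [LinearEquiv.coe_coe, he_J r hr, he_J _ (Ideal.mul_mem_left _ a hr)]
      exact bimodAutSubgroup.coe_apply_mul_left hψ ha ⟨r, hr⟩ _)
    (fun r hr b hb ↦ by
      rw [LinearEquiv.coe_coe, he_J r hr, he_J _ (jacobsonRadical.mul_mem_right k A b hr)]
      exact bimodAutSubgroup.coe_apply_mul_right hψ ⟨r, hr⟩ hb _)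
  refine ⟨⟨AlgEquiv.ofLinearEquiv e (he_fix 1 A_s.one_mem) he_mul, he_fix⟩, ?_⟩
  exact Subtype.ext (LinearEquiv.ext fun r ↦ Subtype.ext (he_J r r.2))

end

theorem stmt_5 (A_s : Subalgebra k A)
    (hJ2 : ∀ x ∈ (⊥ : Ideal A).jacobson, ∀ y ∈ (⊥ : Ideal A).jacobson, x * y = 0)
    (hinf : Subalgebra.toSubmodule A_s ⊓ jacobsonRadical k A = ⊥)
    (hsup : Subalgebra.toSubmodule A_s ⊔ jacobsonRadical k A = ⊤) :
    ∃ e : fixSubgroup k A A_s ≃* bimodAutSubgroup k A A_s,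
      ∀ (σ : fixSubgroup k A A_s) (x : jacobsonRadical k A),
        (((e σ : (jacobsonRadical k A) ≃ₗ[k] (jacobsonRadical k A)) x : A))
          = (σ : A ≃ₐ[k] A) x := by
  have h : IsCompl (Subalgebra.toSubmodule A_s) (jacobsonRadical k A) :=
    ⟨disjoint_iff.mpr hinf, codisjoint_iff.mpr hsup⟩
  exact ⟨MulEquiv.ofBijective (fixSubgroupRestrictHom A_s)
    ⟨fixSubgroupRestrictHom_injective h.codisjoint, fixSubgroupRestrictHom_surjective hJ2 h⟩,
    fun _ _ ↦ rfl⟩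

end
end

section
/- Let k be a field, n ≥ 1 and l ≥ 2, and let I be a homogeneous ideal of k[X_1,…,X_n] with ⟨X_1,…,X_n⟩^l ⊆ I ⊆ ⟨X_1,…,X_n⟩². Set A = k[X_1,…,X_n]/I, write x_i = X_i + I, and let J be the ideal of A generated by x_1,…,x_n. Then every k-algebra automorphism φ of A factors uniquely as φ = φ_M ∘ u, where M ∈ GL_n(k) satisfies F_M(I) ⊆ I, φ_M is the automorphism of A induced by F_M, and u is a k-algebra automorphism of A with u(x_i) − x_i ∈ J² for every i. -/
/-!
An automorphism `φ` of `A = k[X]/I` sends each `x_j` to a nilpotent element, hence into `J`, so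
modulo `J²` it acts as `x_j ↦ ∑ i, M i j • x_i` for a matrix `M`; this linear part is unique
because `I ⊆ 𝔪²` (with `𝔪 = (X_1, …, X_n)`), and it is multiplicative under composition.
Lifting `φ(x_j)` to `q_j ≡ F_M(X_j) mod 𝔪²`, a homogeneous `g ∈ I` of degree `d` gives
`g(q) ∈ I`, whose degree-`d` component is `F_M(g)`; as `I` is homogeneous, `F_M(I) ⊆ I`.
Doing the same for `φ⁻¹` shows that `M` is invertible and `φ_M` is an automorphism, and
`u = φ_M⁻¹ ∘ φ` has the identity as linear part. Conversely, in any factorization `φ = φ_M ∘ u`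
the linear part of `φ` is `M`, which forces uniqueness.
-/

open MvPolynomial

namespace Ideal

variable {R ι : Type*} [CommRing R] (𝔞 : Ideal R)

theorem prod_sub_prod_mem_pow (s : Finset ι) {a b : ι → R} {e : ι → ℕ}
    (ha : ∀ i ∈ s, a i ∈ 𝔞 ^ e i) (hab : ∀ i ∈ s, b i - a i ∈ 𝔞 ^ (e i + 1)) :
    ∏ i ∈ s, b i - ∏ i ∈ s, a i ∈ 𝔞 ^ (∑ i ∈ s, e i + 1) := by
  classical
  induction s using Finset.induction with
  | empty => simp
  | @insert i s hi ih =>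
    simp only [Finset.forall_mem_insert] at ha hab
    have hprod : ∏ j ∈ s, a j ∈ 𝔞 ^ ∑ j ∈ s, e j := by
      rw [← Finset.prod_pow_eq_pow_sum]
      exact prod_mem_prod ha.2
    have hprod' : ∏ j ∈ s, b j ∈ 𝔞 ^ ∑ j ∈ s, e j := by
      simpa using add_mem hprod (pow_le_pow_right (Nat.le_succ _) (ih ha.2 hab.2))
    rw [Finset.prod_insert hi, Finset.prod_insert hi, Finset.sum_insert hi,
      show b i * ∏ j ∈ s, b j - a i * ∏ j ∈ s, a j =
        (b i - a i) * ∏ j ∈ s, b j + a i * (∏ j ∈ s, b j - ∏ j ∈ s, a j) by ring]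
    refine add_mem ?_ ?_
    · simpa only [← pow_add, add_right_comm] using mul_mem_mul hab.1 hprod'
    · simpa only [← pow_add, add_assoc] using mul_mem_mul ha.1 (ih ha.2 hab.2)

theorem pow_sub_pow_mem_pow {a b : R} (ha : a ∈ 𝔞) (hab : b - a ∈ 𝔞 ^ 2) (n : ℕ) :
    b ^ n - a ^ n ∈ 𝔞 ^ (n + 1) := by
  simpa using 𝔞.prod_sub_prod_mem_pow (Finset.range n) (a := fun _ => a) (b := fun _ => b)
    (e := fun _ => 1) (fun _ _ => by simpa using ha) (fun _ _ => by simpa using hab)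

end Ideal

namespace MvPolynomial

variable {σ R : Type*} [CommRing R]

theorem algHom_sub_mem_of_forall_X {S : Type*} [CommRing S] [Algebra R S]
    {φ₁ φ₂ : MvPolynomial σ R →ₐ[R] S} {𝔞 : Ideal S} (h : ∀ i, φ₁ (X i) - φ₂ (X i) ∈ 𝔞)
    (f : MvPolynomial σ R) : φ₁ f - φ₂ f ∈ 𝔞 := by
  rw [← Ideal.Quotient.eq]
  have : (Ideal.Quotient.mkₐ R 𝔞).comp φ₁ = (Ideal.Quotient.mkₐ R 𝔞).comp φ₂ :=
    algHom_ext fun i => by simpa [Ideal.Quotient.eq] using h i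
  exact AlgHom.congr_fun this f

theorem aeval_sub_aeval_mem_pow {S : Type*} [CommRing S] [Algebra R S] {𝔞 : Ideal S}
    {p q : σ → S} (hp : ∀ i, p i ∈ 𝔞) (hpq : ∀ i, q i - p i ∈ 𝔞 ^ 2)
    {g : MvPolynomial σ R} {d : ℕ} (hg : g.IsHomogeneous d) :
    aeval q g - aeval p g ∈ 𝔞 ^ (d + 1) := by
  rw [g.as_sum, map_sum, map_sum, ← Finset.sum_sub_distrib]
  refine Ideal.sum_mem _ fun s hs => ?_
  rw [aeval_monomial, aeval_monomial, ← mul_sub, Finsupp.prod, Finsupp.prod]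
  refine Ideal.mul_mem_left _ _ ?_
  have hdeg : ∑ i ∈ s.support, s i = d := by
    rw [← Finsupp.degree_apply, Finsupp.degree_eq_weight_one]
    exact hg (mem_support_iff.mp hs)
  simpa only [hdeg] using 𝔞.prod_sub_prod_mem_pow s.support
    (fun i _ => Ideal.pow_mem_pow (hp i) (s i))
    (fun i _ => 𝔞.pow_sub_pow_mem_pow (hp i) (hpq i) (s i))

theorem IsHomogeneous.mem_pow_idealOfVars {p : MvPolynomial σ R} {d : ℕ}
    (hp : p.IsHomogeneous d) : p ∈ idealOfVars σ R ^ d := by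
  rw [mem_pow_idealOfVars_iff]
  intro s hs
  rw [Finsupp.degree_eq_weight_one]
  exact (hp (mem_support_iff.mp hs)).ge

theorem mem_idealOfVars_iff_constantCoeff {f : MvPolynomial σ R} :
    f ∈ idealOfVars σ R ↔ constantCoeff f = 0 := by
  rw [← pow_one (idealOfVars σ R), mem_pow_idealOfVars_iff', constantCoeff_eq]
  simp [Finsupp.degree_eq_zero_iff]

theorem mem_idealOfVars_of_pow_mem [IsReduced R] {f : MvPolynomial σ R} {N : ℕ}
    (h : f ^ N ∈ idealOfVars σ R) : f ∈ idealOfVars σ R := by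
  rw [mem_idealOfVars_iff_constantCoeff] at h ⊢
  exact IsReduced.eq_zero _ ⟨N, by rwa [← map_pow]⟩

theorem coeff_single_one_eq_of_sub_mem {f g : MvPolynomial σ R}
    (h : f - g ∈ idealOfVars σ R ^ 2) (i : σ) :
    coeff (Finsupp.single i 1) f = coeff (Finsupp.single i 1) g := by
  rw [← sub_eq_zero, ← coeff_sub]
  exact (mem_pow_idealOfVars_iff' 2 _).mp h _ (by simp)

theorem homogeneousComponent_add_of_mem_pow {p r : MvPolynomial σ R} {d : ℕ}
    (hp : p.IsHomogeneous d) (hr : r ∈ idealOfVars σ R ^ (d + 1)) :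
    homogeneousComponent d (p + r) = p := by
  rw [map_add, homogeneousComponent_eq_self hp, add_eq_left]
  refine homogeneousComponent_eq_zero' _ _ fun s hs => ?_
  have := (mem_pow_idealOfVars_iff _ _).mp hr s hs
  omega

theorem homogeneousComponent_aeval_of_sub_mem {L q : σ → MvPolynomial σ R}
    (hL : ∀ i, (L i).IsHomogeneous 1) (hq : ∀ i, q i - L i ∈ idealOfVars σ R ^ 2)
    {g : MvPolynomial σ R} {d : ℕ} (hg : g.IsHomogeneous d) :
    homogeneousComponent d (aeval q g) = aeval L g := by
  rw [← add_sub_cancel (aeval L g) (aeval q g)]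
  refine homogeneousComponent_add_of_mem_pow (by simpa using hg.aeval L hL) ?_
  exact aeval_sub_aeval_mem_pow (fun i => by simpa using (hL i).mem_pow_idealOfVars) hq hg


attribute [local instance] MvPolynomial.gradedAlgebra in
theorem isHomogeneous_span {σ R : Type*} [CommRing R] {S : Set (MvPolynomial σ R)}
    (hS : ∀ f ∈ S, ∃ d, f.IsHomogeneous d) :
    (Ideal.span S).IsHomogeneous (homogeneousSubmodule σ R) :=
  Ideal.homogeneous_span _ _ fun f hf =>
    (hS f hf).imp fun d hd => (mem_homogeneousSubmodule d f).mpr hd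

variable [Fintype σ]

/-- `aeval (linearSubst M)` is the change of variables `F_M`. -/
noncomputable def linearSubst (M : Matrix σ σ R) (j : σ) : MvPolynomial σ R :=
  ∑ i, C (M i j) * X i

theorem isHomogeneous_linearSubst (M : Matrix σ σ R) (j : σ) :
    (linearSubst M j).IsHomogeneous 1 :=
  IsHomogeneous.sum _ _ _ fun i _ => by
    simpa using (isHomogeneous_C σ (M i j)).mul (isHomogeneous_X R i)

theorem linearSubst_one [DecidableEq σ] : linearSubst (1 : Matrix σ σ R) = X := by
  ext1 j
  simp [linearSubst, Matrix.one_apply]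

theorem aeval_linearSubst_linearSubst (M N : Matrix σ σ R) (j : σ) :
    aeval (linearSubst M) (linearSubst N j) = linearSubst (M * N) j := by
  simp only [linearSubst, map_sum, map_mul, aeval_C, aeval_X, Matrix.mul_apply,
    Finset.mul_sum, Finset.sum_mul]
  rw [Finset.sum_comm]
  refine Finset.sum_congr rfl fun i _ => Finset.sum_congr rfl fun r _ => ?_
  rw [algebraMap_eq]
  ring

theorem coeff_zero_linearSubst (M : Matrix σ σ R) (j : σ) : coeff 0 (linearSubst M j) = 0 := by
  simp [linearSubst, coeff_sum]

theorem coeff_single_linearSubst (M : Matrix σ σ R) (i j : σ) :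
    coeff (Finsupp.single i 1) (linearSubst M j) = M i j := by
  classical
  simp [linearSubst, coeff_sum, coeff_X, Finsupp.single_left_inj one_ne_zero]

theorem eq_of_linearSubst_sub_mem_pow_two {M N : Matrix σ σ R}
    (h : ∀ j, linearSubst M j - linearSubst N j ∈ idealOfVars σ R ^ 2) : M = N := by
  ext i j
  rw [← coeff_single_linearSubst M, ← coeff_single_linearSubst N]
  exact coeff_single_one_eq_of_sub_mem (h j) i

theorem exists_sub_linearSubst_mem {f : σ → MvPolynomial σ R}
    (hf : ∀ j, f j ∈ idealOfVars σ R) :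
    ∃ M : Matrix σ σ R, ∀ j, f j - linearSubst M j ∈ idealOfVars σ R ^ 2 := by
  refine ⟨Matrix.of fun i j => coeff (Finsupp.single i 1) (f j), fun j => ?_⟩
  rw [mem_pow_idealOfVars_iff']
  intro s hs
  obtain hs0 | hs1 : s.degree = 0 ∨ s.degree = 1 := by omega
  · rw [Finsupp.degree_eq_zero_iff] at hs0
    subst hs0
    rw [coeff_sub, coeff_zero_linearSubst, sub_zero, ← constantCoeff_eq,
      ← mem_idealOfVars_iff_constantCoeff]
    exact hf j
  · obtain ⟨i, rfl⟩ : s ∈ Set.range (Finsupp.single · 1) := by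
      rw [Finsupp.range_single_one]; exact hs1
    simp [coeff_single_linearSubst]

section Quotient

variable {σ k : Type*} [CommRing k] {I : Ideal (MvPolynomial σ k)}

local notation "𝔪" => idealOfVars σ k
local notation "𝔧" => Ideal.map (Ideal.Quotient.mk I) (idealOfVars σ k)

theorem mk_mem_map_pow_two_iff (hI : I ≤ 𝔪 ^ 2) {f : MvPolynomial σ k} :
    Ideal.Quotient.mk I f ∈ 𝔧 ^ 2 ↔ f ∈ 𝔪 ^ 2 := by
  rw [← Ideal.map_pow]
  exact Ideal.mem_quotient_iff_mem hI

theorem isNilpotent_mk_X {l : ℕ} (hIl : 𝔪 ^ l ≤ I) (i : σ) :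
    IsNilpotent (Ideal.Quotient.mk I (X i)) := by
  refine ⟨l, ?_⟩
  rw [← map_pow, Ideal.Quotient.eq_zero_iff_mem]
  exact hIl (Ideal.pow_mem_pow (Ideal.subset_span (Set.mem_range_self i)) l)

theorem mem_map_mk_of_isNilpotent [IsReduced k] (hI : I ≤ 𝔪) {a : MvPolynomial σ k ⧸ I}
    (ha : IsNilpotent a) : a ∈ 𝔧 := by
  obtain ⟨f, rfl⟩ := Ideal.Quotient.mk_surjective a
  obtain ⟨N, hN⟩ := ha
  rw [← map_pow, Ideal.Quotient.eq_zero_iff_mem] at hN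
  exact Ideal.mem_map_of_mem _ (mem_idealOfVars_of_pow_mem (hI hN))

variable [Fintype σ]

def HasLinearPart (ψ : (MvPolynomial σ k ⧸ I) →ₐ[k] (MvPolynomial σ k ⧸ I))
    (M : Matrix σ σ k) : Prop :=
  ∀ j, ψ (Ideal.Quotient.mk I (X j)) - Ideal.Quotient.mk I (linearSubst M j) ∈ 𝔧 ^ 2

theorem exists_hasLinearPart [IsReduced k] {l : ℕ} (hI : I ≤ 𝔪) (hIl : 𝔪 ^ l ≤ I)
    (ψ : (MvPolynomial σ k ⧸ I) →ₐ[k] (MvPolynomial σ k ⧸ I)) : ∃ M, HasLinearPart ψ M := by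
  choose f hf hfψ using fun j => (Ideal.mem_map_iff_of_surjective _ Ideal.Quotient.mk_surjective).mp
    (mem_map_mk_of_isNilpotent hI ((isNilpotent_mk_X hIl j).map ψ))
  obtain ⟨M, hM⟩ := exists_sub_linearSubst_mem hf
  refine ⟨M, fun j => ?_⟩
  rw [← hfψ, ← map_sub, ← Ideal.map_pow]
  exact Ideal.mem_map_of_mem _ (hM j)

theorem hasLinearPart_one_iff [DecidableEq σ]
    {ψ : (MvPolynomial σ k ⧸ I) →ₐ[k] (MvPolynomial σ k ⧸ I)} :
    HasLinearPart ψ 1 ↔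
      ∀ j, ψ (Ideal.Quotient.mk I (X j)) - Ideal.Quotient.mk I (X j) ∈ 𝔧 ^ 2 := by
  simp only [HasLinearPart, linearSubst_one]

theorem hasLinearPart_id [DecidableEq σ] : HasLinearPart (AlgHom.id k (MvPolynomial σ k ⧸ I)) 1 :=
  hasLinearPart_one_iff.mpr fun j => by simp

theorem hasLinearPart_quotientMapₐ (M : Matrix σ σ k)
    (hM : I ≤ I.comap (aeval (linearSubst M))) :
    HasLinearPart (Ideal.quotientMapₐ I (aeval (linearSubst M)) hM) M :=
  fun j => by simp

namespace HasLinearPart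

variable {ψ χ : (MvPolynomial σ k ⧸ I) →ₐ[k] (MvPolynomial σ k ⧸ I)} {M N : Matrix σ σ k}

theorem sub_mem (hψ : HasLinearPart ψ M) (f : MvPolynomial σ k) :
    ψ (Ideal.Quotient.mk I f) - Ideal.Quotient.mk I (aeval (linearSubst M) f) ∈ 𝔧 ^ 2 :=
  algHom_sub_mem_of_forall_X (φ₁ := ψ.comp (Ideal.Quotient.mkₐ k I))
    (φ₂ := (Ideal.Quotient.mkₐ k I).comp (aeval (linearSubst M)))
    (fun j => by simpa using hψ j) f

theorem map_pow_two_le (hψ : HasLinearPart ψ M) : (𝔧 ^ 2).map ψ ≤ 𝔧 ^ 2 := by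
  rw [Ideal.map_pow]
  refine Ideal.pow_right_mono ?_ 2
  rw [Ideal.map_le_iff_le_comap, Ideal.map_le_iff_le_comap, idealOfVars, Ideal.span_le,
    Set.range_subset_iff]
  intro j
  have hlin : Ideal.Quotient.mk I (linearSubst M j) ∈ 𝔧 :=
    Ideal.mem_map_of_mem _ (by simpa using (isHomogeneous_linearSubst M j).mem_pow_idealOfVars)
  simpa using add_mem (Ideal.pow_le_self two_ne_zero (hψ j)) hlin

theorem comp (hψ : HasLinearPart ψ M) (hχ : HasLinearPart χ N) :
    HasLinearPart (ψ.comp χ) (M * N) := fun j => by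
  have h := add_mem (hψ.map_pow_two_le (Ideal.mem_map_of_mem ψ (hχ j)))
    (hψ.sub_mem (linearSubst N j))
  rwa [map_sub, sub_add_sub_cancel, aeval_linearSubst_linearSubst] at h

theorem unique (hI : I ≤ 𝔪 ^ 2) (hM : HasLinearPart ψ M) (hN : HasLinearPart ψ N) : M = N :=
  eq_of_linearSubst_sub_mem_pow_two fun j => (mk_mem_map_pow_two_iff hI).mp <| by
    simpa only [sub_sub_sub_cancel_left, map_sub] using Ideal.sub_mem _ (hN j) (hM j)

attribute [local instance] MvPolynomial.gradedAlgebra in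
theorem le_comap (hhom : I.IsHomogeneous (homogeneousSubmodule σ k)) (hI : I ≤ 𝔪 ^ 2)
    (hψ : HasLinearPart ψ M) : I ≤ I.comap (aeval (linearSubst M)) := by
  choose q hq using fun j => Ideal.Quotient.mk_surjective (ψ (Ideal.Quotient.mk I (X j)))
  have hqM : ∀ j, q j - linearSubst M j ∈ 𝔪 ^ 2 := fun j =>
    (mk_mem_map_pow_two_iff hI).mp (by rw [map_sub, hq]; exact hψ j)
  have hψq : ∀ g, ψ (Ideal.Quotient.mk I g) = Ideal.Quotient.mk I (aeval q g) := fun g =>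
    AlgHom.congr_fun (algHom_ext (f := ψ.comp (Ideal.Quotient.mkₐ k I))
      (g := (Ideal.Quotient.mkₐ k I).comp (aeval q)) fun j => by simp [hq]) g
  intro g hg
  rw [Ideal.mem_comap, ← sum_homogeneousComponent g, map_sum]
  refine Ideal.sum_mem _ fun d _ => ?_
  have hgd := homogeneousComponent_mem_of_mem hhom hg d
  have hqgd : aeval q (homogeneousComponent d g) ∈ I := by
    rw [← Ideal.Quotient.eq_zero_iff_mem, ← hψq, Ideal.Quotient.eq_zero_iff_mem.mpr hgd, map_zero]
  rw [← homogeneousComponent_aeval_of_sub_mem (isHomogeneous_linearSubst M) hqM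
    (homogeneousComponent_isHomogeneous d g)]
  exact homogeneousComponent_mem_of_mem hhom hqgd d

end HasLinearPart

theorem apply_eq_quotientMapₐ_apply {M : Matrix σ σ k}
    {φ u : (MvPolynomial σ k ⧸ I) ≃ₐ[k] (MvPolynomial σ k ⧸ I)}
    (hM : I ≤ I.comap (aeval (linearSubst M)))
    (hφ : ∀ f, φ (u.symm (Ideal.Quotient.mk I f)) =
      Ideal.Quotient.mk I (aeval (linearSubst M) f)) (a : MvPolynomial σ k ⧸ I) :
    φ a = Ideal.quotientMapₐ I _ hM (u a) := by
  obtain ⟨f, hf⟩ := Ideal.Quotient.mk_surjective (u a)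
  rw [← hf]
  calc φ a = φ (u.symm (Ideal.Quotient.mk I f)) := by rw [hf, AlgEquiv.symm_apply_apply]
    _ = _ := hφ f

variable [DecidableEq σ] {M N : Matrix σ σ k}

theorem quotientMapₐ_linearSubst_comp (hMN : M * N = 1)
    (hM : I ≤ I.comap (aeval (linearSubst M))) (hN : I ≤ I.comap (aeval (linearSubst N))) :
    (Ideal.quotientMapₐ I _ hM).comp (Ideal.quotientMapₐ I _ hN) = AlgHom.id k _ := by
  refine Ideal.Quotient.algHom_ext _ (algHom_ext fun j => ?_)
  simp only [AlgHom.comp_apply, Ideal.Quotient.mkₐ_eq_mk, Ideal.quotient_map_mkₐ, aeval_X,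
    aeval_linearSubst_linearSubst, hMN, linearSubst_one, AlgHom.id_apply]

noncomputable def linearSubstQuotientEquiv (hMN : M * N = 1) (hNM : N * M = 1)
    (hM : I ≤ I.comap (aeval (linearSubst M))) (hN : I ≤ I.comap (aeval (linearSubst N))) :
    (MvPolynomial σ k ⧸ I) ≃ₐ[k] (MvPolynomial σ k ⧸ I) :=
  AlgEquiv.ofAlgHom _ _ (quotientMapₐ_linearSubst_comp hMN hM hN)
    (quotientMapₐ_linearSubst_comp hNM hN hM)

theorem hasLinearPart_of_apply_symm_mk
    {φ u : (MvPolynomial σ k ⧸ I) ≃ₐ[k] (MvPolynomial σ k ⧸ I)}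
    (hM : I ≤ I.comap (aeval (linearSubst M)))
    (hu : ∀ j, u (Ideal.Quotient.mk I (X j)) - Ideal.Quotient.mk I (X j) ∈ 𝔧 ^ 2)
    (hφ : ∀ f, φ (u.symm (Ideal.Quotient.mk I f)) =
      Ideal.Quotient.mk I (aeval (linearSubst M) f)) :
    HasLinearPart φ.toAlgHom M := by
  have hφ_eq : φ.toAlgHom = (Ideal.quotientMapₐ I _ hM).comp u.toAlgHom :=
    AlgHom.ext (apply_eq_quotientMapₐ_apply hM hφ)
  simpa [hφ_eq] using (hasLinearPart_quotientMapₐ M hM).comp (hasLinearPart_one_iff.mpr hu)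

end Quotient

end MvPolynomial

theorem stmt_8_general (k : Type*) [Field k] (n l : ℕ)
    (I : Ideal (MvPolynomial (Fin n) k))
    (hhom : ∃ S : Set (MvPolynomial (Fin n) k),
        (∀ f ∈ S, ∃ d, f.IsHomogeneous d) ∧ I = Ideal.span S)
    (hIl : (Ideal.span (Set.range (X : Fin n → MvPolynomial (Fin n) k))) ^ l ≤ I)
    (hI2 : I ≤ (Ideal.span (Set.range (X : Fin n → MvPolynomial (Fin n) k))) ^ 2)
    (J : Ideal (MvPolynomial (Fin n) k ⧸ I))
    (hJ : J = Ideal.span (Set.range fun i => Ideal.Quotient.mk I (X i))) :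
    ∀ φ : (MvPolynomial (Fin n) k ⧸ I) ≃ₐ[k] (MvPolynomial (Fin n) k ⧸ I),
      ∃! Mu : GL (Fin n) k × ((MvPolynomial (Fin n) k ⧸ I) ≃ₐ[k] (MvPolynomial (Fin n) k ⧸ I)),
        (∀ g ∈ I,
            aeval (fun j => ∑ i, C ((Mu.1 : Matrix (Fin n) (Fin n) k) i j) * X i) g ∈ I) ∧
        (∀ i : Fin n,
            Mu.2 (Ideal.Quotient.mk I (X i)) - Ideal.Quotient.mk I (X i) ∈ J ^ 2) ∧
        (∀ f : MvPolynomial (Fin n) k,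
            φ (Mu.2.symm (Ideal.Quotient.mk I f)) =
              Ideal.Quotient.mk I
                (aeval (fun j => ∑ i, C ((Mu.1 : Matrix (Fin n) (Fin n) k) i j) * X i) f)) := by
  obtain rfl : J = (idealOfVars (Fin n) k).map (Ideal.Quotient.mk I) := by
    rw [hJ, idealOfVars, Ideal.map_span, ← Set.range_comp]
    rfl
  obtain ⟨S, hS, hIS⟩ := hhom
  have hIhom := hIS ▸ isHomogeneous_span hS
  intro φ
  have hI : I ≤ idealOfVars (Fin n) k := hI2.trans (Ideal.pow_le_self two_ne_zero)
  obtain ⟨M, hM⟩ := exists_hasLinearPart hI hIl (φ : _ →ₐ[k] _)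
  obtain ⟨N, hN⟩ := exists_hasLinearPart hI hIl (φ.symm : _ →ₐ[k] _)
  have hMN : M * N = 1 := (hM.comp hN).unique hI2 (φ.comp_symm ▸ hasLinearPart_id)
  have hNM : N * M = 1 := (hN.comp hM).unique hI2 (φ.symm_comp ▸ hasLinearPart_id)
  have hMI := hM.le_comap hIhom hI2
  have hNI := hN.le_comap hIhom hI2
  let e := linearSubstQuotientEquiv hMN hNM hMI hNI
  refine ⟨(⟨M, N, hMN, hNM⟩, φ.trans e.symm), ⟨hMI, ?_, fun f => ?_⟩, ?_⟩
  · exact hasLinearPart_one_iff.mp (hNM ▸ (hasLinearPart_quotientMapₐ N hNI).comp hM)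
  · exact φ.apply_symm_apply (e (Ideal.Quotient.mk _ f))
  rintro ⟨M', u⟩ ⟨hM'I, hu, hφ⟩
  obtain rfl : (M' : Matrix (Fin n) (Fin n) k) = M :=
    (hasLinearPart_of_apply_symm_mk hM'I hu hφ).unique hI2 hM
  refine Prod.ext (Units.ext rfl) (AlgEquiv.ext fun a => e.injective ?_)
  rw [AlgEquiv.trans_apply, e.apply_symm_apply, apply_eq_quotientMapₐ_apply hM'I hφ]
  rfl

/-- paper's Proposition 5.4: `Aut_k(A) ≅ Im(Φ_A) ⋉ Ker(Φ_A)`. Let `I` be a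
homogeneous ideal of `k[X_1,…,X_n]` with `⟨X_1,…,X_n⟩^l ⊆ I ⊆ ⟨X_1,…,X_n⟩²` (`n ≥ 1`,
`l ≥ 2`), let `A = k[X_1,…,X_n]/I`, `x_i = X_i + I`, and let `J` be the ideal of `A` generated
by the `x_i`.  Then every `k`-algebra automorphism `φ` of `A` factors uniquely as
`φ = φ_M ∘ u`, where `M ∈ GL_n(k)` satisfies `F_M(I) ⊆ I`, `φ_M` is induced by the linear
change of variables `F_M`, and `u` is an automorphism with `u(x_i) - x_i ∈ J²` for all `i`. -/
theorem stmt_8 (k : Type*) [Field k] (n l : ℕ) (hn : 1 ≤ n) (hl : 2 ≤ l)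
    (I : Ideal (MvPolynomial (Fin n) k))
    (hhom : ∃ S : Set (MvPolynomial (Fin n) k),
        (∀ f ∈ S, ∃ d, f.IsHomogeneous d) ∧ I = Ideal.span S)
    (hIl : (Ideal.span (Set.range (X : Fin n → MvPolynomial (Fin n) k))) ^ l ≤ I)
    (hI2 : I ≤ (Ideal.span (Set.range (X : Fin n → MvPolynomial (Fin n) k))) ^ 2)
    (J : Ideal (MvPolynomial (Fin n) k ⧸ I))
    (hJ : J = Ideal.span (Set.range fun i => Ideal.Quotient.mk I (X i))) :
    ∀ φ : (MvPolynomial (Fin n) k ⧸ I) ≃ₐ[k] (MvPolynomial (Fin n) k ⧸ I),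
      ∃! Mu : GL (Fin n) k × ((MvPolynomial (Fin n) k ⧸ I) ≃ₐ[k] (MvPolynomial (Fin n) k ⧸ I)),
        (∀ g ∈ I,
            aeval (fun j => ∑ i, C ((Mu.1 : Matrix (Fin n) (Fin n) k) i j) * X i) g ∈ I) ∧
        (∀ i : Fin n,
            Mu.2 (Ideal.Quotient.mk I (X i)) - Ideal.Quotient.mk I (X i) ∈ J ^ 2) ∧
        (∀ f : MvPolynomial (Fin n) k,
            φ (Mu.2.symm (Ideal.Quotient.mk I f)) =
              Ideal.Quotient.mk I
                (aeval (fun j => ∑ i, C ((Mu.1 : Matrix (Fin n) (Fin n) k) i j) * X i) f)) :=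
  stmt_8_general k n l I hhom hIl hI2 J hJ
end
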